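/- Let R be an associative ring with identity. Then R is a weakly √JU ring if and only if R/J(R) is a weakly UU ring (i.e., every unit of R/J(R) equals ±1 plus a nilpotent). -/
import Mathlib


/-- `√J(R)`: elements with some power in the Jacobson radical. -/
def sqrtJ (R : Type*) [Ring R] : Set R :=
  {x | ∃ n : ℕ, 1 ≤ n ∧ x ^ n ∈ Ideal.jacobson (⊥ : Ideal R)}

/-- `R` is a weakly `√JU` ring: every unit is `1 + j` or `-1 + j` with `j ∈ √J(R)`. -/
def IsWSqrtJU (R : Type*) [Ring R] : Prop :=
  ∀ u : Rˣ, ∃ j ∈ sqrtJ R, (u : R) = 1 + j ∨ (u : R) = -1 + j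

/-- `R` is a `√JU` ring: every unit is `1 + j` with `j ∈ √J(R)`. -/
def IsSqrtJU (R : Type*) [Ring R] : Prop :=
  ∀ u : Rˣ, ∃ j ∈ sqrtJ R, (u : R) = 1 + j

/-- `R` is a weakly `UU` ring: every unit is `±1` plus a nilpotent. -/
def IsWUU (R : Type*) [Ring R] : Prop :=
  ∀ u : Rˣ, ∃ q : R, IsNilpotent q ∧ ((u : R) = 1 + q ∨ (u : R) = -1 + q)

/-- In any ring, `1 + a` is a unit when `a` lies in the Jacobson radical. -/
lemma isUnit_one_add_of_mem_jacobson {R : Type*} [Ring R] (a : R)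
    (ha : a ∈ Ideal.jacobson (⊥ : Ideal R)) : IsUnit (1 + a) := by
  -- left inverse s for 1 + a
  obtain ⟨s, hs⟩ := Ideal.exists_mul_sub_mem_of_sub_one_mem_jacobson (1 + a)
    (by simpa using ha)
  rw [Ideal.mem_bot, sub_eq_zero] at hs
  -- s itself is 1 + (element of J)
  have hsJ : s - 1 ∈ Ideal.jacobson (⊥ : Ideal R) := by
    have h1 : s - 1 = -(s * a) := by
      have hs2 : s + s * a = 1 := by rw [← hs]; noncomm_ring
      rw [← hs2]; abel
    rw [h1]
    exact neg_mem (Ideal.mul_mem_left _ s ha)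
  obtain ⟨t, ht⟩ := Ideal.exists_mul_sub_mem_of_sub_one_mem_jacobson s hsJ
  rw [Ideal.mem_bot, sub_eq_zero] at ht
  -- t = 1 + a, so s is a two-sided inverse of 1 + a
  have hts : t = 1 + a := by
    calc t = t * (s * (1 + a)) := by rw [hs, mul_one]
    _ = (t * s) * (1 + a) := by rw [mul_assoc]
    _ = 1 + a := by rw [ht, one_mul]
  have hinv : (1 + a) * s = 1 := by rw [← hts]; exact ht
  exact ⟨⟨1 + a, s, hinv, hs⟩, rfl⟩

lemma exists_pos_pow_eq_zero {S : Type*} [MonoidWithZero S] {q : S}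
    (h : IsNilpotent q) : ∃ n : ℕ, 1 ≤ n ∧ q ^ n = 0 := by
  obtain ⟨n, hn⟩ := h
  rcases n with _ | n
  · -- q ^ 0 = 0 means 1 = 0, so everything is 0
    refine ⟨1, le_refl 1, ?_⟩
    have h1 : (1 : S) = 0 := by simpa using hn
    calc q ^ 1 = q * 1 := by rw [pow_one, mul_one]
    _ = q * 0 := by rw [h1]
    _ = 0 := mul_zero q
  · exact ⟨n + 1, Nat.succ_le_succ (Nat.zero_le n), hn⟩

theorem stmt16 {R S : Type*} [Ring R] [Ring S] (f : R →+* S)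
    (hf : Function.Surjective f)
    (hker : ∀ x : R, f x = 0 ↔ x ∈ Ideal.jacobson (⊥ : Ideal R)) :
    IsWSqrtJU R ↔ IsWUU S := by
  constructor
  · intro h u
    obtain ⟨x, hx⟩ := hf (u : S)
    obtain ⟨y, hy⟩ := hf ((u⁻¹ : Sˣ) : S)
    -- x * y and y * x are 1 + (elt of J), hence units
    have hxy : IsUnit (x * y) := by
      have : x * y - 1 ∈ Ideal.jacobson (⊥ : Ideal R) := by
        rw [← hker]
        simp [hx, hy]
      simpa using isUnit_one_add_of_mem_jacobson _ this
    have hyx : IsUnit (y * x) := by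
      have : y * x - 1 ∈ Ideal.jacobson (⊥ : Ideal R) := by
        rw [← hker]
        simp [hx, hy]
      simpa using isUnit_one_add_of_mem_jacobson _ this
    -- hence x is a unit
    obtain ⟨c, hc⟩ := hxy.exists_right_inv
    obtain ⟨d, hd⟩ := hyx.exists_left_inv
    have hr : x * (y * c) = 1 := by rw [← mul_assoc]; exact hc
    have hl : (d * y) * x = 1 := by rw [mul_assoc]; exact hd
    have heq : d * y = y * c := by
      calc d * y = (d * y) * (x * (y * c)) := by rw [hr, mul_one]
      _ = ((d * y) * x) * (y * c) := by rw [mul_assoc, mul_assoc, mul_assoc]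
      _ = y * c := by rw [hl, one_mul]
    have hxu : IsUnit x := ⟨⟨x, y * c, hr, heq ▸ hl⟩, rfl⟩
    obtain ⟨v, hv⟩ := hxu
    obtain ⟨j, ⟨n, hn1, hnJ⟩, hj⟩ := h v
    refine ⟨f j, ⟨n, ?_⟩, ?_⟩
    · rw [← map_pow]
      exact (hker _).2 hnJ
    · rcases hj with hj | hj
      · left
        rw [← hx, ← hv, hj]
        simp
      · right
        rw [← hx, ← hv, hj]
        simp
  · intro h u
    set v : Sˣ := Units.map f.toMonoidHom u with hv
    obtain ⟨q, hq, hcase⟩ := h v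
    obtain ⟨n, hn1, hn⟩ := exists_pos_pow_eq_zero hq
    have hvu : (v : S) = f u := rfl
    rcases hcase with hc | hc
    · refine ⟨(u : R) - 1, ⟨n, hn1, ?_⟩, Or.inl (by abel)⟩
      rw [← hker, map_pow, map_sub, map_one, ← hvu, hc]
      simp [hn]
    · refine ⟨(u : R) + 1, ⟨n, hn1, ?_⟩, Or.inr (by abel)⟩
      rw [← hker, map_pow, map_add, map_one, ← hvu, hc]
      simp [hn]
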